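/- For even n, the complete graph Kₙ admits a proper edge colouring with n − 1 colours. -/

import Mathlib

open SimpleGraph

variable {V : Type*} {W : Type*}

/-- The direct (tensor) product of two simple graphs. -/
def tensorProd (G : SimpleGraph V) (H : SimpleGraph W) : SimpleGraph (V × W) where
  Adj a b := G.Adj a.1 b.1 ∧ H.Adj a.2 b.2
  symm := ⟨fun _ _ h => ⟨h.1.symm, h.2.symm⟩⟩
  loopless := ⟨fun _ h => G.irrefl h.1⟩

instance tensorProd.adjDecidable (G : SimpleGraph V) (H : SimpleGraph W)
    [DecidableRel G.Adj] [DecidableRel H.Adj] : DecidableRel (tensorProd G H).Adj :=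
  fun a b => (instDecidableAnd : Decidable (G.Adj a.1 b.1 ∧ H.Adj a.2 b.2))

/-- A proper edge colouring with `n` colours, given as a symmetric function on adjacent pairs. -/
def IsEdgeColoring (G : SimpleGraph V) (n : ℕ) (ce : V → V → Fin n) : Prop :=
  (∀ u v, G.Adj u v → ce u v = ce v u) ∧
  (∀ u v w, G.Adj u v → G.Adj u w → v ≠ w → ce u v ≠ ce u w)

/-- A proper total colouring with `n` colours. -/
def IsTotalColoring (G : SimpleGraph V) (n : ℕ) (cv : V → Fin n) (ce : V → V → Fin n) : Prop :=
  (∀ u v, G.Adj u v → ce u v = ce v u) ∧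
  (∀ u v, G.Adj u v → cv u ≠ cv v) ∧
  (∀ u v w, G.Adj u v → G.Adj u w → v ≠ w → ce u v ≠ ce u w) ∧
  (∀ u v, G.Adj u v → ce u v ≠ cv u ∧ ce u v ≠ cv v)

/-- The total chromatic number of a graph. -/
noncomputable def totalChromaticNumber (G : SimpleGraph V) : ℕ :=
  sInf {n | ∃ cv ce, IsTotalColoring G n cv ce}

/-- Adjacency of the crown graph. -/
def crownAdj {m : ℕ} : Fin m ⊕ Fin m → Fin m ⊕ Fin m → Prop
  | Sum.inl k, Sum.inr t => k ≠ t
  | Sum.inr k, Sum.inl t => k ≠ t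
  | _, _ => False

/-- The crown graph `J_{2m}`: `K_{m,m}` minus a perfect matching. -/
def crown (m : ℕ) : SimpleGraph (Fin m ⊕ Fin m) where
  Adj := crownAdj
  symm := ⟨by rintro (k|k) (t|t) h <;> simp only [crownAdj] at * <;> exact fun e => h e.symm⟩
  loopless := ⟨by rintro (k|k) h <;> simp only [crownAdj] at h⟩

instance crown.adjDecidable (m : ℕ) : DecidableRel (crown m).Adj := fun a b =>
  match a, b with
  | Sum.inl k, Sum.inr t => (inferInstance : Decidable (k ≠ t))
  | Sum.inr k, Sum.inl t => (inferInstance : Decidable (k ≠ t))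
  | Sum.inl _, Sum.inl _ => isFalse (fun h => h)
  | Sum.inr _, Sum.inr _ => isFalse (fun h => h)


/-! Round-robin scheduling: for an odd `m`, take the vertices to be `ℤ/m` together with a point
at infinity. Colour the edge `{u, v}` by `u + v` and the edge `{∞, v}` by `2v`. At a finite
vertex `u` the colours are `u + v` for `v ≠ u` and `2u = u + u`, which are distinct; at `∞` they
are distinct because doubling is injective in a group of odd order. -/

section RoundRobin

variable {A : Type*} [AddCancelCommMonoid A]

/-- The point at infinity is `none`; the colour of the loop at `∞` is irrelevant. -/
def roundRobinColoring : Option A → Option A → A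
  | some u, y => u + y.getD u
  | none, some v => 2 • v
  | none, none => 0

theorem roundRobinColoring_comm (x y : Option A) :
    roundRobinColoring x y = roundRobinColoring y x := by
  rcases x with _ | u <;> rcases y with _ | v <;>
    simp [roundRobinColoring, two_nsmul, add_comm]

theorem roundRobinColoring_injOn (h2 : Function.Injective (fun a : A => 2 • a)) (x : Option A) :
    Set.InjOn (roundRobinColoring x) {x}ᶜ := by
  rcases x with _ | u
  · rintro (_ | v) hv (_ | w) hw hvw
    all_goals simp_all [roundRobinColoring, h2.eq_iff]
  · rintro (_ | v) hv (_ | w) hw hvw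
    all_goals simp_all [roundRobinColoring, two_nsmul, eq_comm]

end RoundRobin

theorem isEdgeColoring_top_of_injOn {k : ℕ} (ce : V → V → Fin k)
    (hsymm : ∀ u v, ce u v = ce v u) (hinj : ∀ u, Set.InjOn (ce u) {u}ᶜ) :
    IsEdgeColoring (⊤ : SimpleGraph V) k ce :=
  ⟨fun u v _ => hsymm u v, fun u _ _ huv huw hvw h =>
    hvw (hinj u (Ne.symm huv) (Ne.symm huw) h)⟩

theorem Kn_edgeColoring_even (n : ℕ) (hn : Even n) :
    ∃ ce : Fin n → Fin n → Fin (n - 1),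
      IsEdgeColoring (⊤ : SimpleGraph (Fin n)) (n - 1) ce := by
  obtain _ | m := n
  · exact ⟨fun u => u.elim0, fun u => u.elim0, fun u => u.elim0⟩
  have hm : Odd m := Nat.not_even_iff_odd.mp (Nat.even_add_one.mp hn)
  have : NeZero m := ⟨hm.pos.ne'⟩
  have h2 : Function.Injective (fun a : Fin m => 2 • a) :=
    (Nat.Coprime.nsmul_right_bijective (by simpa using Nat.coprime_two_right.mpr hm)).injective
  rw [Nat.add_sub_cancel]
  let e := finSuccEquiv m
  refine ⟨fun u v => roundRobinColoring (e u) (e v),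
    isEdgeColoring_top_of_injOn _ (fun u v => roundRobinColoring_comm _ _) fun u => ?_⟩
  exact (roundRobinColoring_injOn h2 (e u)).comp e.injective.injOn
    fun v hv => e.injective.ne hv
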